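/- arXiv:2009.04649 — 3 statements merged into one kernel-verified Lean document; each statement's English description precedes it below -/
import Mathlib

section
/- For all n ≥ 0, the sum over j from 0 to 2n−1 of f(j)·f(j+1) equals f(2n)^2 − 1, where f is the shifted Fibonacci sequence with f(0)=f(1)=1. -/
def f : ℕ → ℕ
  | 0 => 1
  | 1 => 1
  | n + 2 => f (n + 1) + f n

lemma aux (n : ℕ) :
    ∑ j ∈ Finset.range (2 * n), f j * f (j + 1) + 1 = (f (2 * n)) ^ 2 := by
  induction n with
  | zero => simp [f]
  | succ k ih =>
    have h2 : 2 * (k + 1) = (2 * k) + 1 + 1 := by ring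
    rw [h2, Finset.sum_range_succ, Finset.sum_range_succ]
    have hf : f (2 * k + 1 + 1) = f (2 * k + 1) + f (2 * k) := rfl
    nlinarith [ih, hf]

theorem stmt3 (n : ℕ) :
    ∑ j ∈ Finset.range (2 * n), f j * f (j + 1) = (f (2 * n)) ^ 2 - 1 := by
  have := aux n; omega
end

section
/- For all n ≥ 0, f(n)·f(n+1) = 1 + ⌊n/2⌋ + sum over j from 1 to n of j·f(n−j)·f(n−j+1), where f is the shifted Fibonacci sequence with f(0)=f(1)=1. -/
lemma fadd (n : ℕ) : (f (n + 2) : ℤ) = f (n + 1) + f n := by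
  show ((f (n + 1) + f n : ℕ) : ℤ) = _
  push_cast; ring

lemma cat (n : ℕ) : (f n : ℤ) * f (n + 2) = (f (n + 1) : ℤ) ^ 2 + (-1) ^ n := by
  induction n with
  | zero => simp [f]
  | succ m ih =>
    show (f (m + 1) : ℤ) * f (m + 3) = (f (m + 2) : ℤ) ^ 2 + (-1) ^ (m + 1)
    have h3 : (f (m + 3) : ℤ) = f (m + 2) + f (m + 1) := fadd (m + 1)
    have h2 := fadd m
    rw [h3, pow_succ]
    rw [h2] at ih ⊢
    linear_combination -ih

lemma lemA (n : ℕ) : (f (n + 1) : ℤ) ^ 2 + (n / 2 : ℕ) =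
    ((n + 1) / 2 : ℕ) + ∑ k ∈ Finset.range (n + 1), (f k : ℤ) * f (k + 1) := by
  induction n with
  | zero => simp [f]
  | succ m ih =>
    show (f (m + 2) : ℤ) ^ 2 + (((m + 1) / 2 : ℕ) : ℤ) =
      (((m + 2) / 2 : ℕ) : ℤ) + ∑ k ∈ Finset.range (m + 2), (f k : ℤ) * f (k + 1)
    rw [Finset.sum_range_succ]
    have hc := cat m
    have h2 := fadd m
    have hd1 : (((m + 2) / 2 : ℕ) : ℤ) = ((m / 2 : ℕ) : ℤ) + 1 := by omega
    rcases Nat.even_or_odd m with h | h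
    · have hp : (((m + 1) / 2 : ℕ) : ℤ) = ((m / 2 : ℕ) : ℤ) := by
        obtain ⟨k, hk⟩ := h; subst hk; omega
      rw [h.neg_one_pow] at hc
      rw [hp] at ih
      rw [h2] at hc
      rw [hd1, hp, h2]
      nlinarith [ih, hc]
    · have hp : (((m + 1) / 2 : ℕ) : ℤ) = ((m / 2 : ℕ) : ℤ) + 1 := by
        obtain ⟨k, hk⟩ := h; subst hk; omega
      rw [Odd.neg_one_pow h] at hc
      rw [hp] at ih
      rw [h2] at hc
      rw [hd1, hp, h2]
      nlinarith [ih, hc]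

lemma lemT (n : ℕ) : (f n : ℤ) * f (n + 1) =
    1 + (n / 2 : ℕ) + ∑ k ∈ Finset.range n, ((n - k : ℕ) : ℤ) * f k * f (k + 1) := by
  induction n with
  | zero => simp [f]
  | succ m ih =>
    show (f (m + 1) : ℤ) * f (m + 2) = 1 + (((m + 1) / 2 : ℕ) : ℤ) +
      ∑ k ∈ Finset.range (m + 1), ((m + 1 - k : ℕ) : ℤ) * f k * f (k + 1)
    have hA := lemA m
    have hsum : ∑ k ∈ Finset.range (m + 1), ((m + 1 - k : ℕ) : ℤ) * f k * f (k + 1) =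
        (∑ k ∈ Finset.range m, ((m - k : ℕ) : ℤ) * f k * f (k + 1)) +
        (∑ k ∈ Finset.range (m + 1), (f k : ℤ) * f (k + 1)) := by
      have step : ∀ k ∈ Finset.range (m + 1), ((m + 1 - k : ℕ) : ℤ) * f k * f (k + 1) =
          ((m - k : ℕ) : ℤ) * f k * f (k + 1) + (f k : ℤ) * f (k + 1) := by
        intro k hk
        have hk' : k < m + 1 := Finset.mem_range.mp hk
        have : ((m + 1 - k : ℕ) : ℤ) = ((m - k : ℕ) : ℤ) + 1 := by omega
        rw [this]; ring
      rw [Finset.sum_congr rfl step, Finset.sum_add_distrib, Finset.sum_range_succ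
        (f := fun k => ((m - k : ℕ) : ℤ) * f k * f (k + 1))]
      simp
    rw [hsum, fadd m]
    nlinarith [ih, hA]

lemma reindex (n : ℕ) : ∑ j ∈ Finset.Icc 1 n, (j : ℤ) * f (n - j) * f (n - j + 1) =
    ∑ k ∈ Finset.range n, ((n - k : ℕ) : ℤ) * f k * f (k + 1) := by
  refine Finset.sum_nbij' (fun j => n - j) (fun k => n - k) ?_ ?_ ?_ ?_ ?_
  · intro j hj; simp at hj ⊢; omega
  · intro k hk; simp at hk ⊢; omega
  · intro j hj; simp at hj; show n - (n - j) = j; omega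
  · intro k hk; simp at hk; show n - (n - k) = k; omega
  · intro j hj
    simp only [Finset.mem_Icc] at hj
    show (j : ℤ) * f (n - j) * f (n - j + 1) = ((n - (n - j) : ℕ) : ℤ) * f (n - j) * f (n - j + 1)
    have h1 : n - (n - j) = j := by omega
    rw [h1]

theorem stmt6 (n : ℕ) :
    f n * f (n + 1) = 1 + n / 2 + ∑ j ∈ Finset.Icc 1 n, j * f (n - j) * f (n - j + 1) := by
  have hT := lemT n
  have hre := reindex n
  have key : ((f n * f (n + 1) : ℕ) : ℤ) =
      ((1 + n / 2 + ∑ j ∈ Finset.Icc 1 n, j * f (n - j) * f (n - j + 1) : ℕ) : ℤ) := by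
    rw [Nat.cast_mul, Nat.cast_add, Nat.cast_add, Nat.cast_sum, Nat.cast_one]
    simp only [Nat.cast_mul]
    rw [hre]
    linarith [hT]
  exact Nat.cast_injective key
end

section
/- Define C : ℕ → ℕ → ℕ (written C(n,r)) by C(n,r) = C(n−2,r) + binom(n+r, 2r) for n ≥ r ≥ 0, with C(n,r) = 0 when n < 0, where out-of-range terms vanish. Then for every integer p > 0 and all n ≥ 0, f(n)·f(n+1) = (sum over r from 0 to p−1 of C(n,r)) + sum over j from p to n of binom(j+p−1, 2p−1)·f(n−j)·f(n+1−j), where f is the shifted Fibonacci sequence with f(0)=f(1)=1. -/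
def C : ℕ → ℕ → ℕ
  | 0, r => Nat.choose r (2 * r)
  | 1, r => Nat.choose (1 + r) (2 * r)
  | n + 2, r => C n r + Nat.choose (n + 2 + r) (2 * r)

/-- product of consecutive (shifted) Fibonacci numbers -/
def g (n : ℕ) : ℕ := f n * f (n + 1)

lemma g_zero : g 0 = 1 := rfl
lemma g_one : g 1 = 2 := rfl
lemma g_two : g 2 = 6 := rfl

lemma g_rec (m : ℕ) : g (m + 3) + g m = 2 * g (m + 2) + 2 * g (m + 1) := by
  have h2 : f (m + 2) = f (m + 1) + f m := rfl
  have h3 : f (m + 3) = f (m + 2) + f (m + 1) := rfl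
  have h4 : f (m + 4) = f (m + 3) + f (m + 2) := rfl
  show f (m+3) * f (m+3+1) + f m * f (m+1) = 2 * (f (m+2) * f (m+2+1)) + 2 * (f (m+1) * f (m+1+1))
  have e1 : m+3+1 = m+4 := rfl
  have e2 : m+2+1 = m+3 := rfl
  have e3 : m+1+1 = m+2 := rfl
  rw [e1, e2, e3, h4, h3, h2]
  ring

/-- convolution of a sequence with g -/
def Su (u : ℕ → ℕ) (m : ℕ) : ℕ := ∑ i ∈ Finset.range (m + 1), u i * g (m - i)

lemma Su_zero (u : ℕ → ℕ) : Su u 0 = u 0 := by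
  simp [Su, g_zero]

lemma Su_one (u : ℕ → ℕ) : Su u 1 = 2 * u 0 + u 1 := by
  simp [Su, Finset.sum_range_succ, g_zero, g_one]
  ring

lemma Su_two (u : ℕ → ℕ) : Su u 2 = 6 * u 0 + 2 * u 1 + u 2 := by
  simp [Su, Finset.sum_range_succ, g_zero, g_one, g_two]
  ring

lemma Su_two' (u : ℕ → ℕ) : Su u 2 = 2 * Su u 1 + 2 * Su u 0 + u 2 := by
  rw [Su_zero, Su_one, Su_two]; ring

lemma Su_rec (u : ℕ → ℕ) (m : ℕ) :
    Su u (m + 3) + Su u m = 2 * Su u (m + 2) + 2 * Su u (m + 1) + u (m + 3) := by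
  have h3 : Su u (m + 3) = (∑ i ∈ Finset.range (m + 1), u i * g (m + 3 - i))
      + u (m+1) * 6 + u (m+2) * 2 + u (m+3) * 1 := by
    show (∑ i ∈ Finset.range (m + 3 + 1), u i * g (m + 3 - i)) = _
    rw [show m + 3 + 1 = (m+1) + 1 + 1 + 1 from rfl, Finset.sum_range_succ,
      Finset.sum_range_succ, Finset.sum_range_succ]
    rw [show m + 3 - (m+1) = 2 by omega, show m + 3 - (m+1+1) = 1 by omega,
      show m + 3 - (m+1+1+1) = 0 by omega, g_zero, g_one, g_two,
      show m+1+1 = m+2 from rfl, show m+1+1+1 = m+3 from rfl]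
  have h2 : Su u (m + 2) = (∑ i ∈ Finset.range (m + 1), u i * g (m + 2 - i))
      + u (m+1) * 2 + u (m+2) * 1 := by
    show (∑ i ∈ Finset.range (m + 2 + 1), u i * g (m + 2 - i)) = _
    rw [show m + 2 + 1 = (m+1) + 1 + 1 from rfl, Finset.sum_range_succ, Finset.sum_range_succ]
    rw [show m + 2 - (m+1) = 1 by omega, show m + 2 - (m+1+1) = 0 by omega,
      g_zero, g_one, show m+1+1 = m+2 from rfl]
  have h1 : Su u (m + 1) = (∑ i ∈ Finset.range (m + 1), u i * g (m + 1 - i))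
      + u (m+1) * 1 := by
    show (∑ i ∈ Finset.range (m + 1 + 1), u i * g (m + 1 - i)) = _
    rw [Finset.sum_range_succ, show m + 1 - (m+1) = 0 by omega, g_zero]
  have h0 : Su u m = ∑ i ∈ Finset.range (m + 1), u i * g (m - i) := rfl
  have hsum : (∑ i ∈ Finset.range (m + 1), u i * g (m + 3 - i))
      + (∑ i ∈ Finset.range (m + 1), u i * g (m - i))
      = 2 * (∑ i ∈ Finset.range (m + 1), u i * g (m + 2 - i))
      + 2 * (∑ i ∈ Finset.range (m + 1), u i * g (m + 1 - i)) := by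
    rw [← Finset.sum_add_distrib, Finset.mul_sum, Finset.mul_sum, ← Finset.sum_add_distrib]
    refine Finset.sum_congr rfl (fun i hi => ?_)
    have hi' : i ≤ m := by simpa [Nat.lt_succ_iff] using hi
    rw [show m + 3 - i = (m - i) + 3 by omega, show m + 2 - i = (m - i) + 2 by omega,
      show m + 1 - i = (m - i) + 1 by omega]
    have hg := g_rec (m - i)
    calc u i * g (m - i + 3) + u i * g (m - i)
        = u i * (g (m - i + 3) + g (m - i)) := by ring
      _ = u i * (2 * g (m - i + 2) + 2 * g (m - i + 1)) := by rw [hg]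
      _ = 2 * (u i * g (m - i + 2)) + 2 * (u i * g (m - i + 1)) := by ring
  omega

lemma choose_pred (k : ℕ) : Nat.choose (k + 1) k = k + 1 := by
  rw [← Nat.choose_symm (Nat.le_succ k), show k + 1 - k = 1 by omega, Nat.choose_one_right]

lemma pascal (a c : ℕ) : Nat.choose (a + 1) (c + 1) = Nat.choose a c + Nat.choose a (c + 1) :=
  Nat.choose_succ_succ a c

lemma C_rec (n r : ℕ) : C (n + 2) r = C n r + Nat.choose (n + 2 + r) (2 * r) := rfl

lemma C_eq_zero : ∀ n r : ℕ, n < r → C n r = 0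
  | 0, r, h => by
    show Nat.choose r (2 * r) = 0
    exact Nat.choose_eq_zero_of_lt (by omega)
  | 1, r, h => by
    show Nat.choose (1 + r) (2 * r) = 0
    exact Nat.choose_eq_zero_of_lt (by omega)
  | (n+2), r, h => by
    rw [C_rec, C_eq_zero n r (by omega), Nat.choose_eq_zero_of_lt (by omega)]

lemma C_self : ∀ p : ℕ, C p p = 1
  | 0 => rfl
  | 1 => rfl
  | (p+2) => by
    rw [C_rec, C_eq_zero p (p+2) (by omega), show p + 2 + (p + 2) = 2 * (p + 2) by ring,
      Nat.choose_self]

lemma C_succ_self : ∀ p : ℕ, C (p + 1) p = 2 * p + 1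
  | 0 => rfl
  | 1 => by decide
  | (p+2) => by
    rw [show p + 2 + 1 = (p + 1) + 2 from rfl, C_rec, C_eq_zero (p+1) (p+2) (by omega)]
    rw [show p + 1 + 2 + (p + 2) = 2*(p+2) + 1 by ring, choose_pred]
    omega

lemma C_zero_col : ∀ n : ℕ, C n 0 = n / 2 + 1
  | 0 => rfl
  | 1 => rfl
  | (n+2) => by
    have h1 : Nat.choose (n + 2 + 0) (2 * 0) = 1 := by simp
    rw [C_rec, C_zero_col n, h1]
    omega

/-- the key structural identity for C -/
lemma CW : ∀ n r : ℕ, C n r + C (n + 1) r = Nat.choose (n + r + 2) (2 * r + 1)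
  | 0, r => by
    rw [Nat.zero_add, Nat.zero_add]
    show Nat.choose r (2*r) + Nat.choose (1 + r) (2*r) = Nat.choose (r + 2) (2 * r + 1)
    match r with
    | 0 => decide
    | 1 => decide
    | (s+2) =>
      rw [Nat.choose_eq_zero_of_lt (show s + 2 < 2 * (s+2) by omega),
        Nat.choose_eq_zero_of_lt (show 1 + (s + 2) < 2 * (s+2) by omega),
        Nat.choose_eq_zero_of_lt (show s + 2 + 2 < 2 * (s+2) + 1 by omega)]
  | 1, r => by
    show C 1 r + (C 0 r + Nat.choose (0 + 2 + r) (2 * r)) = Nat.choose (1 + r + 2) (2 * r + 1)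
    show Nat.choose (1 + r) (2*r) + (Nat.choose r (2*r) + Nat.choose (0 + 2 + r) (2 * r))
        = Nat.choose (1 + r + 2) (2 * r + 1)
    rw [show 0 + 2 + r = 2 + r by ring]
    match r with
    | 0 => decide
    | 1 => decide
    | 2 => decide
    | (s+3) =>
      rw [Nat.choose_eq_zero_of_lt (show 1 + (s+3) < 2 * (s+3) by omega),
        Nat.choose_eq_zero_of_lt (show s + 3 < 2 * (s+3) by omega),
        Nat.choose_eq_zero_of_lt (show 2 + (s+3) < 2 * (s+3) by omega),
        Nat.choose_eq_zero_of_lt (show 1 + (s+3) + 2 < 2 * (s+3) + 1 by omega)]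
  | (n+2), r => by
    have ih := CW n r
    rw [show n + 2 + 1 = (n + 1) + 2 from rfl, C_rec, C_rec]
    have p1 : Nat.choose (n + r + 4) (2*r + 1)
        = Nat.choose (n + r + 3) (2*r) + Nat.choose (n + r + 3) (2*r+1) := by
      have h := pascal (n + r + 3) (2*r)
      rw [show n + r + 3 + 1 = n + r + 4 from rfl] at h
      exact h
    have p2 : Nat.choose (n + r + 3) (2*r + 1)
        = Nat.choose (n + r + 2) (2*r) + Nat.choose (n + r + 2) (2*r+1) := by
      have h := pascal (n + r + 2) (2*r)
      rw [show n + r + 2 + 1 = n + r + 3 from rfl] at h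
      exact h
    rw [show n + 2 + r + 2 = n + r + 4 by ring] at *
    rw [show n + 2 + r = n + r + 2 by ring, show n + 1 + 2 + r = n + r + 3 by ring]
    omega

def b (t : ℕ) (i : ℕ) : ℕ := Nat.choose (2 * t + 1 + i) (2 * t + 1)

def T (t : ℕ) (m : ℕ) : ℕ := ∑ i ∈ Finset.range m, b t i * g (m - 1 - i)

lemma T_zero (t : ℕ) : T t 0 = 0 := by simp [T]

lemma T_succ (t m : ℕ) : T t (m + 1) = Su (b t) m := by
  unfold T Su
  refine Finset.sum_congr rfl (fun i hi => ?_)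
  rw [show m + 1 - 1 - i = m - i by omega]

lemma b_zero (t : ℕ) : b t 0 = 1 := by simp [b]

lemma b_one (t : ℕ) : b t 1 = 2 * t + 2 := by
  unfold b
  rw [show 2*t+1+1 = (2*t+1)+1 from rfl, choose_pred]

/-- balance identity matching forcing terms -/
lemma KEY (t m : ℕ) :
    b t (m + 3) + 2 * C (t + m + 3) (t + 1) + 2 * C (t + m + 2) (t + 1)
      = C (t + m + 4) (t + 1) + C (t + m + 1) (t + 1) + b (t + 1) (m + 2) := by
  have cw1 : C (t + m + 1) (t + 1) + C (t + m + 2) (t + 1)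
      = Nat.choose (2*t + m + 4) (2*t + 3) := by
    have h := CW (t + m + 1) (t + 1)
    rw [show t + m + 1 + 1 = t + m + 2 from rfl,
      show t + m + 1 + (t + 1) + 2 = 2*t + m + 4 by ring,
      show 2 * (t + 1) + 1 = 2*t + 3 by ring] at h
    exact h
  have cw2 : C (t + m + 2) (t + 1) + C (t + m + 3) (t + 1)
      = Nat.choose (2*t + m + 5) (2*t + 3) := by
    have h := CW (t + m + 2) (t + 1)
    rw [show t + m + 2 + 1 = t + m + 3 from rfl,
      show t + m + 2 + (t + 1) + 2 = 2*t + m + 5 by ring,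
      show 2 * (t + 1) + 1 = 2*t + 3 by ring] at h
    exact h
  have crec : C (t + m + 4) (t + 1) = C (t + m + 2) (t + 1)
      + Nat.choose (2*t + m + 5) (2*t + 2) := by
    have h := C_rec (t + m + 2) (t + 1)
    rw [show t + m + 2 + 2 = t + m + 4 from rfl,
      show t + m + 4 + (t + 1) = 2*t + m + 5 by ring,
      show 2 * (t + 1) = 2*t + 2 by ring] at h
    exact h
  have hb1 : b t (m + 3) = Nat.choose (2*t + m + 4) (2*t + 1) := by
    unfold b; congr 1; omega
  have hb2 : b (t + 1) (m + 2) = Nat.choose (2*t + m + 5) (2*t + 3) := by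
    unfold b
    congr 1
    omega
  have p1 : Nat.choose (2*t + m + 5) (2*t + 3)
      = Nat.choose (2*t + m + 4) (2*t + 2) + Nat.choose (2*t + m + 4) (2*t + 3) := by
    have h := pascal (2*t + m + 4) (2*t + 2)
    rw [show 2*t + m + 4 + 1 = 2*t + m + 5 from rfl,
      show 2*t + 2 + 1 = 2*t + 3 from rfl] at h
    exact h
  have p2 : Nat.choose (2*t + m + 5) (2*t + 2)
      = Nat.choose (2*t + m + 4) (2*t + 1) + Nat.choose (2*t + m + 4) (2*t + 2) := by
    have h := pascal (2*t + m + 4) (2*t + 1)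
    rw [show 2*t + m + 4 + 1 = 2*t + m + 5 from rfl,
      show 2*t + 1 + 1 = 2*t + 2 from rfl] at h
    exact h
  omega

/-- triple-step matching of two sequences satisfying the same driven recurrence -/
lemma match3 (X Y c : ℕ → ℕ) (h0 : X 0 = Y 0) (h1 : X 1 = Y 1) (h2 : X 2 = Y 2)
    (hX : ∀ m, X (m+3) + X m = 2 * X (m+2) + 2 * X (m+1) + c m)
    (hY : ∀ m, Y (m+3) + Y m = 2 * Y (m+2) + 2 * Y (m+1) + c m) :
    ∀ m, X m = Y m := by
  have key : ∀ m, X m = Y m ∧ X (m+1) = Y (m+1) ∧ X (m+2) = Y (m+2) := by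
    intro m
    induction m with
    | zero => exact ⟨h0, h1, h2⟩
    | succ k ih =>
      obtain ⟨e0, e1, e2⟩ := ih
      refine ⟨e1, e2, ?_⟩
      have := hX k
      have := hY k
      rw [show k + 1 + 2 = k + 3 by ring]
      omega
  exact fun m => (key m).1

/-- the main step: peeling off one layer of the telescoping -/
lemma LK (t : ℕ) : ∀ m, Su (b t) m = C (t + 1 + m) (t + 1) + T (t + 1) m := by
  have base0 : Su (b t) 0 = C (t + 1 + 0) (t + 1) + T (t + 1) 0 := by
    rw [Su_zero, b_zero, T_zero, show t + 1 + 0 = t + 1 from rfl, C_self]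
  have base1 : Su (b t) 1 = C (t + 1 + 1) (t + 1) + T (t + 1) 1 := by
    have h1 : T (t + 1) 1 = Su (b (t+1)) 0 := T_succ _ 0
    rw [Su_one, b_zero, b_one, h1, Su_zero, b_zero,
      show t + 1 + 1 = (t + 1) + 1 from rfl, C_succ_self]
    omega
  have base2 : Su (b t) 2 = C (t + 1 + 2) (t + 1) + T (t + 1) 2 := by
    have h2 : T (t + 1) 2 = Su (b (t+1)) 1 := T_succ _ 1
    rw [Su_two, b_zero, b_one, h2, Su_one, b_zero, b_one]
    have hb2 : b t 2 = Nat.choose (2*t + 3) (2*t + 1) := by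
      unfold b; congr 1
    have hcr := C_rec (t + 1) (t + 1)
    rw [C_self, show t + 1 + 2 + (t + 1) = 2*t + 4 by ring,
      show 2 * (t + 1) = 2*t + 2 by ring] at hcr
    have hp : Nat.choose (2*t + 4) (2*t + 2)
        = Nat.choose (2*t + 3) (2*t + 1) + Nat.choose (2*t + 3) (2*t + 2) := by
      have h := pascal (2*t + 3) (2*t + 1)
      rw [show 2*t + 3 + 1 = 2*t + 4 from rfl, show 2*t + 1 + 1 = 2*t + 2 from rfl] at h
      exact h
    have hcp : Nat.choose (2*t + 3) (2*t + 2) = 2*t + 3 := by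
      have h := choose_pred (2*t + 2)
      rw [show 2*t + 2 + 1 = 2*t + 3 from rfl] at h
      exact h
    rw [show t + 1 + 2 = (t + 1) + 2 from rfl, hcr, hb2, hp, hcp]
    omega
  have hY : ∀ m, (C (t + 1 + (m+3)) (t + 1) + T (t + 1) (m+3))
      + (C (t + 1 + m) (t + 1) + T (t + 1) m)
      = 2 * (C (t + 1 + (m+2)) (t + 1) + T (t + 1) (m+2))
      + 2 * (C (t + 1 + (m+1)) (t + 1) + T (t + 1) (m+1)) + b t (m + 3) := by
    intro m
    match m with
    | 0 =>
      show (C (t + 1 + 3) (t + 1) + T (t + 1) 3) + (C (t + 1 + 0) (t + 1) + T (t + 1) 0)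
        = 2 * (C (t + 1 + 2) (t + 1) + T (t + 1) 2)
          + 2 * (C (t + 1 + 1) (t + 1) + T (t + 1) 1) + b t 3
      have t3 : T (t + 1) 3 = Su (b (t+1)) 2 := T_succ _ 2
      have t2 : T (t + 1) 2 = Su (b (t+1)) 1 := T_succ _ 1
      have t1 : T (t + 1) 1 = Su (b (t+1)) 0 := T_succ _ 0
      rw [t3, t2, t1, T_zero, Su_two' (b (t+1))]
      have hkey : b t 3 + 2 * C (t + 1 + 2) (t + 1) + 2 * C (t + 1 + 1) (t + 1)
          = C (t + 1 + 3) (t + 1) + C (t + 1 + 0) (t + 1) + b (t + 1) 2 := by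
        have h := KEY t 0
        rw [show t + 0 + 3 = t + 1 + 2 by omega, show t + 0 + 2 = t + 1 + 1 by omega,
          show t + 0 + 4 = t + 1 + 3 by omega, show t + 0 + 1 = t + 1 + 0 by omega] at h
        exact h
      omega
    | (k+1) =>
      have t4 : T (t + 1) (k + 1 + 3) = Su (b (t+1)) (k + 3) := by
        rw [show k + 1 + 3 = (k + 3) + 1 by omega, T_succ]
      have t3 : T (t + 1) (k + 1 + 2) = Su (b (t+1)) (k + 2) := by
        rw [show k + 1 + 2 = (k + 2) + 1 by omega, T_succ]
      have t2 : T (t + 1) (k + 1 + 1) = Su (b (t+1)) (k + 1) := by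
        rw [show k + 1 + 1 = (k + 1) + 1 from rfl, T_succ]
      have t1 : T (t + 1) (k + 1) = Su (b (t+1)) k := T_succ _ k
      rw [t4, t3, t2, t1]
      have hrec := Su_rec (b (t+1)) k
      have hkey : b t (k + 1 + 3) + 2 * C (t + 1 + (k + 1 + 2)) (t + 1)
          + 2 * C (t + 1 + (k + 1 + 1)) (t + 1)
          = C (t + 1 + (k + 1 + 3)) (t + 1) + C (t + 1 + (k + 1)) (t + 1)
            + b (t + 1) (k + 3) := by
        have h := KEY t (k + 1)
        rw [show t + (k + 1) + 3 = t + 1 + (k + 1 + 2) by omega,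
          show t + (k + 1) + 2 = t + 1 + (k + 1 + 1) by omega,
          show t + (k + 1) + 4 = t + 1 + (k + 1 + 3) by omega,
          show t + (k + 1) + 1 = t + 1 + (k + 1) by omega,
          show k + 1 + 2 = k + 3 by omega] at h
        exact h
      omega
  exact match3 (Su (b t)) (fun m => C (t + 1 + m) (t + 1) + T (t + 1) m) (fun m => b t (m+3))
    base0 base1 base2 (fun m => Su_rec (b t) m) hY

/-- base layer: p = 1 -/
lemma LK0 : ∀ n, g n = C n 0 + T 0 n := by
  have hb : ∀ i, b 0 i = i + 1 := by
    intro i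
    unfold b
    simp [Nat.choose_one_right]
    omega
  have base0 : g 0 = C 0 0 + T 0 0 := by rw [g_zero, T_zero]; rfl
  have base1 : g 1 = C 1 0 + T 0 1 := by
    have h1 : T 0 1 = Su (b 0) 0 := T_succ _ 0
    rw [g_one, h1, Su_zero, hb 0]; rfl
  have base2 : g 2 = C 2 0 + T 0 2 := by
    have h2 : T 0 2 = Su (b 0) 1 := T_succ _ 1
    rw [g_two, h2, Su_one, hb 0, hb 1, C_zero_col]
  have hY : ∀ m, (C (m+3) 0 + T 0 (m+3)) + (C m 0 + T 0 m)
      = 2 * (C (m+2) 0 + T 0 (m+2)) + 2 * (C (m+1) 0 + T 0 (m+1)) + 0 := by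
    intro m
    have h0 := C_zero_col m
    have h1 := C_zero_col (m+1)
    have h2 := C_zero_col (m+2)
    have h3 := C_zero_col (m+3)
    match m with
    | 0 =>
      show (C 3 0 + T 0 3) + (C 0 0 + T 0 0)
        = 2 * (C 2 0 + T 0 2) + 2 * (C 1 0 + T 0 1) + 0
      have t3 : T 0 3 = Su (b 0) 2 := T_succ _ 2
      have t2 : T 0 2 = Su (b 0) 1 := T_succ _ 1
      have t1 : T 0 1 = Su (b 0) 0 := T_succ _ 0
      rw [t3, t2, t1, T_zero, Su_two' (b 0), hb 2]
      have c0 : C 0 0 = 1 := rfl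
      have c1 : C 1 0 = 1 := rfl
      have c2 : C 2 0 = 2 := rfl
      have c3 : C 3 0 = 2 := rfl
      omega
    | (k+1) =>
      have t4 : T 0 (k + 1 + 3) = Su (b 0) (k + 3) := by
        rw [show k + 1 + 3 = (k + 3) + 1 by omega, T_succ]
      have t3 : T 0 (k + 1 + 2) = Su (b 0) (k + 2) := by
        rw [show k + 1 + 2 = (k + 2) + 1 by omega, T_succ]
      have t2 : T 0 (k + 1 + 1) = Su (b 0) (k + 1) := by
        rw [show k + 1 + 1 = (k + 1) + 1 from rfl, T_succ]
      have t1 : T 0 (k + 1) = Su (b 0) k := T_succ _ k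
      rw [t4, t3, t2, t1]
      have hrec := Su_rec (b 0) k
      have := hb (k + 3)
      omega
  have hX : ∀ m, g (m+3) + g m = 2 * g (m+2) + 2 * g (m+1) + 0 := by
    intro m; have := g_rec m; omega
  exact match3 g (fun n => C n 0 + T 0 n) (fun _ => 0) base0 base1 base2 hX hY

/-- telescoped main lemma -/
lemma ML (t : ℕ) : ∀ n, g n = (∑ r ∈ Finset.range (t + 1), C n r) + T t (n - t) := by
  induction t with
  | zero =>
    intro n
    simpa using LK0 n
  | succ s ih =>
    intro n
    rw [Finset.sum_range_succ, ih n]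
    have hstep : T s (n - s) = C n (s + 1) + T (s + 1) (n - (s + 1)) := by
      rcases Nat.lt_or_ge n (s + 1) with h | h
      · rw [show n - s = 0 by omega, show n - (s+1) = 0 by omega, T_zero, T_zero,
          C_eq_zero n (s+1) h]
      · have hm : n - s = (n - (s+1)) + 1 := by omega
        rw [hm, T_succ, LK s (n - (s+1)), show s + 1 + (n - (s+1)) = n by omega]
    omega

theorem stmt7 (p n : ℕ) (hp : 0 < p) :
    f n * f (n + 1) =
      (∑ r ∈ Finset.range p, C n r) +
        ∑ j ∈ Finset.Icc p n, Nat.choose (j + p - 1) (2 * p - 1) * (f (n - j) * f (n + 1 - j)) := by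
  obtain ⟨t, rfl⟩ : ∃ t, p = t + 1 := ⟨p - 1, by omega⟩
  have hml := ML t n
  have hsum : ∑ j ∈ Finset.Icc (t+1) n,
      Nat.choose (j + (t+1) - 1) (2 * (t+1) - 1) * (f (n - j) * f (n + 1 - j))
      = T t (n - t) := by
    rw [← Finset.Ico_add_one_right_eq_Icc, Finset.sum_Ico_eq_sum_range]
    unfold T
    rw [show n + 1 - (t + 1) = n - t by omega]
    refine Finset.sum_congr rfl (fun i hi => ?_)
    have hi' : i < n - t := Finset.mem_range.mp hi
    have e1 : t + 1 + i + (t + 1) - 1 = 2 * t + 1 + i := by omega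
    have e2 : 2 * (t + 1) - 1 = 2 * t + 1 := by omega
    have e3 : n - (t + 1 + i) = n - t - 1 - i := by omega
    have e4 : n + 1 - (t + 1 + i) = (n - t - 1 - i) + 1 := by omega
    rw [e1, e2, e3, e4]
    rfl
  rw [hsum]
  exact hml
end
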